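/- arXiv:1907.05029 — 3 statements merged into one kernel-verified Lean document; each statement's English description precedes it below -/
import Mathlib

section
/- Let M^{K∀} be the canonical model of H_Σ(∀), let Υ be a witnessed maximal consistent set of sort s, and let M^{wit} = (W^{wit}, R^{wit}, V^{wit}) be the witnessed submodel of M^{K∀} generated by Υ (i.e., restricted to witnessed maximal consistent sets reachable from Υ). Then for any sort t ∈ S, any state variable x ∈ SVAR_t, and all witnessed maximal consistent sets Γ, Δ ∈ W^{wit}_t: if x ∈ Γ ∩ Δ, then Γ = Δ. -/
set_option maxHeartbeats 1000000

attribute [local instance] Classical.propDecidable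

namespace HybridML

/-- A many-sorted signature: sorts, operation symbols with arities and result sorts. -/
structure Sig : Type 1 where
  S : Type
  Op : Type
  n : Op → ℕ
  arg : (σ : Op) → Fin (n σ) → S
  res : Op → S

/-- The non-logical vocabulary: S-sorted propositional variables (each nonempty),
nominals, and state variables (each sort inhabited). -/
structure Lang (Sg : Sig) : Type 1 where
  PROP : Sg.S → Type
  NOM : Sg.S → Type
  SVAR : Sg.S → Type
  neP : ∀ s, Nonempty (PROP s)
  neS : ∀ s, Nonempty (SVAR s)

/-- State symbols of sort `t`: nominals or state variables. -/
abbrev StSym {Sg : Sig} (L : Lang Sg) (t : Sg.S) := L.NOM t ⊕ L.SVAR t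

/-- Formulas of the many-sorted hybrid logic `H_Σ(∀)`. -/
inductive Form (Sg : Sig) (L : Lang Sg) : Sg.S → Type where
  | prop {s} : L.PROP s → Form Sg L s
  | nom {s} : L.NOM s → Form Sg L s
  | svar {s} : L.SVAR s → Form Sg L s
  | neg {s} : Form Sg L s → Form Sg L s
  | or {s} : Form Sg L s → Form Sg L s → Form Sg L s
  | app (σ : Sg.Op) : (∀ i, Form Sg L (Sg.arg σ i)) → Form Sg L (Sg.res σ)
  | all {s t} : L.SVAR t → Form Sg L s → Form Sg L s

variable {Sg : Sig} {L : Lang Sg}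

namespace Form

def imp {s} (φ ψ : Form Sg L s) : Form Sg L s := .or (.neg φ) ψ

def and {s} (φ ψ : Form Sg L s) : Form Sg L s := .neg (.or (.neg φ) (.neg ψ))

def iff {s} (φ ψ : Form Sg L s) : Form Sg L s := and (imp φ ψ) (imp ψ φ)

noncomputable def top (s : Sg.S) : Form Sg L s :=
  .or (.prop (Classical.choice (L.neP s))) (.neg (.prop (Classical.choice (L.neP s))))

noncomputable def bot (s : Sg.S) : Form Sg L s := .neg (top s)

end Form

/-- The dual modal operator `σ□`. -/
def dapp (σ : Sg.Op) (φs : ∀ i, Form Sg L (Sg.arg σ i)) : Form Sg L (Sg.res σ) :=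
  .neg (.app σ fun i => .neg (φs i))

/-- The existential binder `∃x φ := ¬∀x¬φ`. -/
def exi {s t} (x : L.SVAR t) (φ : Form Sg L s) : Form Sg L s := .neg (.all x (.neg φ))

/-- Free state variables of a formula (as a set of sorted variables). -/
def free : ∀ {s}, Form Sg L s → Set (Σ u, L.SVAR u)
  | _, .prop _ => ∅
  | _, .nom _ => ∅
  | s, .svar y => {⟨s, y⟩}
  | _, .neg φ => free φ
  | _, .or φ ψ => free φ ∪ free ψ
  | _, .app _ φs => ⋃ i, free (φs i)
  | _, .all y φ => free φ \ {⟨_, y⟩}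

/-- All state variables occurring (free or bound) in a formula. -/
def occ : ∀ {s}, Form Sg L s → Set (Σ u, L.SVAR u)
  | _, .prop _ => ∅
  | _, .nom _ => ∅
  | s, .svar y => {⟨s, y⟩}
  | _, .neg φ => occ φ
  | _, .or φ ψ => occ φ ∪ occ ψ
  | _, .app _ φs => ⋃ i, occ (φs i)
  | _, .all y φ => insert ⟨_, y⟩ (occ φ)

/-- Substitution `φ[ζ/x]` of the formula `ζ` (a state symbol, viewed as a formula) for
all free occurrences of the state variable `x`. -/
noncomputable def subst {t : Sg.S} (x : L.SVAR t) (ζ : Form Sg L t) :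
    ∀ {s}, Form Sg L s → Form Sg L s
  | _, .prop p => .prop p
  | _, .nom j => .nom j
  | s, .svar y =>
      if h : (⟨s, y⟩ : Σ u, L.SVAR u) = ⟨t, x⟩ then
        cast (congrArg (Form Sg L) (congrArg Sigma.fst h)).symm ζ
      else .svar y
  | _, .neg φ => .neg (subst x ζ φ)
  | _, .or φ ψ => .or (subst x ζ φ) (subst x ζ ψ)
  | _, .app σ φs => .app σ (fun i => subst x ζ (φs i))
  | s, .all y φ =>
      if (⟨_, y⟩ : Σ u, L.SVAR u) = ⟨t, x⟩ then .all y φ else .all y (subst x ζ φ)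

/-- `SubstitutableV x y φ`: the state variable `y` is substitutable for `x` in `φ`:
no free occurrence of `x` in `φ` lies in the scope of a binder `∀y`. -/
def SubstitutableV {t u : Sg.S} (x : L.SVAR t) (y : L.SVAR u) : ∀ {s}, Form Sg L s → Prop
  | _, .prop _ => True
  | _, .nom _ => True
  | _, .svar _ => True
  | _, .neg φ => SubstitutableV x y φ
  | _, .or φ ψ => SubstitutableV x y φ ∧ SubstitutableV x y ψ
  | _, .app _ φs => ∀ i, SubstitutableV x y (φs i)
  | _, .all z φ =>
      (⟨t, x⟩ : Σ v, L.SVAR v) ∉ free (Form.all z φ) ∨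
      ((⟨_, z⟩ : Σ v, L.SVAR v) ≠ ⟨u, y⟩ ∧ SubstitutableV x y φ)

/-- An `(S,Σ)`-model: a frame together with a valuation. -/
structure Model (Sg : Sig) (L : Lang Sg) : Type 1 where
  W : Sg.S → Type
  ne : ∀ s, Nonempty (W s)
  R : ∀ σ : Sg.Op, W (Sg.res σ) → (∀ i, W (Sg.arg σ i)) → Prop
  Vp : ∀ s, L.PROP s → Set (W s)
  Vn : ∀ s, L.NOM s → Set (W s)

/-- A model is standard if every nominal is evaluated to a singleton. -/
def Model.Standard (M : Model Sg L) : Prop := ∀ s (j : L.NOM s), ∃ w, M.Vn s j = {w}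

/-- An assignment of the state variables. -/
def Assign (M : Model Sg L) := ∀ s, L.SVAR s → M.W s

/-- `Variant g g' x`: the assignments `g` and `g'` agree except possibly at `x`. -/
def Variant {M : Model Sg L} (g g' : Assign M) {t} (x : L.SVAR t) : Prop :=
  ∀ (u) (y : L.SVAR u), (⟨u, y⟩ : Σ v, L.SVAR v) ≠ ⟨t, x⟩ → g u y = g' u y

/-- The satisfaction relation `M,g,w ⊨_s φ` of `H_Σ(∀)`. -/
def Sat (M : Model Sg L) : ∀ {s}, Assign M → Form Sg L s → M.W s → Prop
  | s, _, .prop p, w => w ∈ M.Vp s p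
  | s, _, .nom j, w => w ∈ M.Vn s j
  | s, g, .svar x, w => w = g s x
  | _, g, .neg φ, w => ¬ Sat M g φ w
  | _, g, .or φ ψ, w => Sat M g φ w ∨ Sat M g ψ w
  | _, g, .app σ φs, w => ∃ ws, M.R σ w ws ∧ ∀ i, Sat M g (φs i) (ws i)
  | _, g, .all x φ, w => ∀ g', Variant g g' x → Sat M g' φ w

/-- Propositional skeletons, used to express "all instances of propositional tautologies". -/
inductive PForm where
  | atom : ℕ → PForm
  | neg : PForm → PForm
  | or : PForm → PForm → PForm

def PForm.eval (v : ℕ → Bool) : PForm → Bool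
  | .atom n => v n
  | .neg p => !(p.eval v)
  | .or p q => p.eval v || q.eval v

/-- A propositional tautology. -/
def PForm.Taut (p : PForm) : Prop := ∀ v, p.eval v = true

/-- Instantiation of a propositional skeleton by formulas of sort `s`. -/
def PForm.inst {s} (f : ℕ → Form Sg L s) : PForm → Form Sg L s
  | .atom n => f n
  | .neg p => .neg (p.inst f)
  | .or p q => .or (p.inst f) (q.inst f)

/-- Hole-free "nominal context" parts: built from `⊤` and the operation symbols. -/
inductive Ctx0 (Sg : Sig) : Sg.S → Type where
  | top {s} : Ctx0 Sg s
  | app (σ : Sg.Op) : (∀ i, Ctx0 Sg (Sg.arg σ i)) → Ctx0 Sg (Sg.res σ)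

/-- Nominal contexts with exactly one hole of sort `h`. -/
inductive Ctx1 (Sg : Sig) (h : Sg.S) : Sg.S → Type where
  | hole : Ctx1 Sg h h
  | app (σ : Sg.Op) (i : Fin (Sg.n σ)) :
      Ctx1 Sg h (Sg.arg σ i) → (∀ j, Ctx0 Sg (Sg.arg σ j)) → Ctx1 Sg h (Sg.res σ)

noncomputable def Ctx0.toForm : ∀ {s}, Ctx0 Sg s → Form Sg L s
  | s, .top => Form.top s
  | _, .app σ cs => .app σ (fun i => (cs i).toForm)

/-- Plugging a formula into the (unique) hole of a nominal context. -/
noncomputable def Ctx1.plug {h} (φ : Form Sg L h) : ∀ {s}, Ctx1 Sg h s → Form Sg L s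
  | _, .hole => φ
  | _, .app σ i c args =>
      .app σ (Function.update (fun j => Ctx0.toForm (args j)) i (c.plug φ))

/-- The dual `η□` of a nominal context, as an operation on formulas. -/
noncomputable def plugD {h s} (θ : Ctx1 Sg h s) (φ : Form Sg L h) : Form Sg L s :=
  .neg (θ.plug (.neg φ))

/-- The deductive system of `H_Σ(∀)`. -/
inductive Prf : ∀ {s : Sg.S}, Form Sg L s → Prop where
  | taut {s} (p : PForm) (f : ℕ → Form Sg L s) : p.Taut → Prf (p.inst f)
  | kax (σ : Sg.Op) (i : Fin (Sg.n σ)) (φs : ∀ j, Form Sg L (Sg.arg σ j))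
      (φ χ : Form Sg L (Sg.arg σ i)) :
      Prf (Form.imp (dapp σ (Function.update φs i (Form.imp φ χ)))
        (Form.imp (dapp σ (Function.update φs i φ)) (dapp σ (Function.update φs i χ))))
  | dualax (σ : Sg.Op) (φs : ∀ j, Form Sg L (Sg.arg σ j)) :
      Prf (Form.iff (.app σ φs) (.neg (dapp σ fun j => .neg (φs j))))
  | q1 {s t} (x : L.SVAR t) (φ ψ : Form Sg L s)
      (hx : (⟨t, x⟩ : Σ v, L.SVAR v) ∉ free φ) :
      Prf (Form.imp (.all x (Form.imp φ ψ)) (Form.imp φ (.all x ψ)))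
  | q2v {s t} (x y : L.SVAR t) (φ : Form Sg L s) (h : SubstitutableV x y φ) :
      Prf (Form.imp (.all x φ) (subst x (.svar y) φ))
  | q2n {s t} (x : L.SVAR t) (j : L.NOM t) (φ : Form Sg L s) :
      Prf (Form.imp (.all x φ) (subst x (.nom j) φ))
  | nameax {s} (x : L.SVAR s) : Prf (exi x (Form.svar x))
  | barcan (σ : Sg.Op) (i : Fin (Sg.n σ)) {t} (x : L.SVAR t)
      (φs : ∀ j, Form Sg L (Sg.arg σ j)) :
      Prf (Form.imp (.all x (dapp σ φs)) (dapp σ (Function.update φs i (.all x (φs i)))))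
  | nomax {s s'} (η θ : Ctx1 Sg s' s) (x : L.SVAR s') (φ : Form Sg L s') :
      Prf (.all x (Form.imp (η.plug (Form.and (.svar x) φ)) (plugD θ (Form.imp (.svar x) φ))))
  | mp {s} {φ ψ : Form Sg L s} : Prf (Form.imp φ ψ) → Prf φ → Prf ψ
  | ug (σ : Sg.Op) (i : Fin (Sg.n σ)) (φs : ∀ j, Form Sg L (Sg.arg σ j))
      {φ : Form Sg L (Sg.arg σ i)} : Prf φ → Prf (dapp σ (Function.update φs i φ))
  | gen {s t} (x : L.SVAR t) {φ : Form Sg L s} : Prf φ → Prf (.all x φ)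

/-- Conjunction of a finite list of formulas. -/
noncomputable def conj {s} : List (Form Sg L s) → Form Sg L s
  | [] => Form.top s
  | φ :: l => Form.and φ (conj l)

/-- A set of sort-`s` formulas is consistent if `⊥_s` is not derivable from it. -/
def Consistent {s} (Γ : Set (Form Sg L s)) : Prop :=
  ¬ ∃ l : List (Form Sg L s), (∀ φ ∈ l, φ ∈ Γ) ∧ Prf (Form.imp (conj l) (Form.bot s))

/-- Maximal consistent sets. -/
def MaxConsistent {s} (Γ : Set (Form Sg L s)) : Prop :=
  Consistent Γ ∧ ∀ Δ, Consistent Δ → Γ ⊆ Δ → Δ = Γ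

/-- A maximal consistent set of sort `s` is witnessed if every existential formula
has a nominal witness conditional in the set. -/
def Witnessed {s} (Γ : Set (Form Sg L s)) : Prop :=
  ∀ {t} (x : L.SVAR t) (φ : Form Sg L s),
    ∃ j : L.NOM t, Form.imp (exi x φ) (subst x (.nom j) φ) ∈ Γ

/-- The canonical relation between (maximal consistent) sets of formulas:
`R_σ w u₁…u_n` iff `σ(ψ₁,…,ψ_n) ∈ w` whenever `ψ_i ∈ u_i` for all `i`. -/
def CanR (σ : Sg.Op) (w : Set (Form Sg L (Sg.res σ)))
    (us : ∀ i, Set (Form Sg L (Sg.arg σ i))) : Prop :=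
  ∀ ψs : ∀ i, Form Sg L (Sg.arg σ i), (∀ i, ψs i ∈ us i) → Form.app σ ψs ∈ w

/-- Reachability from `Υ` in the witnessed canonical model (the generated submodel). -/
inductive Reach {s} (Υ : Set (Form Sg L s)) : ∀ t, Set (Form Sg L t) → Prop where
  | base : Reach Υ s Υ
  | step {σ : Sg.Op} {w : Set (Form Sg L (Sg.res σ))} {us : ∀ i, Set (Form Sg L (Sg.arg σ i))}
      (i : Fin (Sg.n σ)) : Reach Υ (Sg.res σ) w →
      (∀ j, MaxConsistent (us j) ∧ Witnessed (us j)) → CanR σ w us →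
      Reach Υ (Sg.arg σ i) (us i)
/-- Witnessed maximal consistent sets. -/
def WMCS {s} (Γ : Set (Form Sg L s)) : Prop := MaxConsistent Γ ∧ Witnessed Γ

section Completed

variable {s : Sg.S} (Υ : Set (Form Sg L s))

/-- Worlds of the witnessed submodel generated by `Υ`:
witnessed maximal consistent sets reachable from `Υ`. -/
def RW (t : Sg.S) : Type := {Γ : Set (Form Sg L t) // WMCS Γ ∧ Reach Υ t Γ}

/-- The sort `t` needs a dummy state `⋆_t` iff some state variable of sort `t`
occurs in no world of sort `t`. -/
def needsStar (t : Sg.S) : Prop := ∃ x : L.SVAR t, ∀ Γ : RW Υ t, Form.svar x ∉ Γ.val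

/-- Worlds of the completed model: the generated witnessed worlds, plus the dummy
state `⋆_t` (represented by `none`), which is present only when needed. -/
def CW (t : Sg.S) : Type := {o : Option (RW Υ t) // o = none → needsStar Υ t}

variable (hΥ : WMCS Υ)

/-- `Υ` as a world of the generated submodel. -/
def baseW : RW Υ s := ⟨Υ, hΥ, Reach.base⟩

/-- The completed witnessed model generated by `Υ`. -/
noncomputable def completedModel : Model Sg L where
  W := CW Υ
  ne := fun t => by
    by_cases h : Nonempty (RW Υ t)
    · exact ⟨⟨some h.some, fun hc => (Option.some_ne_none _ hc).elim⟩⟩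
    · exact ⟨⟨none, fun _ => ⟨Classical.choice (L.neS t), fun Γ _ => h ⟨Γ⟩⟩⟩⟩
  R := fun σ w ws =>
    (∃ (Γ : RW Υ (Sg.res σ)) (us : ∀ i, RW Υ (Sg.arg σ i)),
        w.val = some Γ ∧ (∀ i, (ws i).val = some (us i)) ∧
        CanR σ Γ.val (fun i => (us i).val))
    ∨ (w.val = none ∧ ∀ i, ∃ h : Sg.arg σ i = s,
        (ws i).val = some (cast (congrArg (RW Υ) h).symm (baseW Υ hΥ)))
  Vp := fun t p => {w | ∃ Γ : RW Υ t, w.val = some Γ ∧ Form.prop p ∈ Γ.val}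
  Vn := fun t j =>
    if ∃ Γ : RW Υ t, Form.nom j ∈ Γ.val then
      {w | ∃ Γ : RW Υ t, w.val = some Γ ∧ Form.nom j ∈ Γ.val}
    else {w | w.val = none}

/-- The completed assignment: each state variable denotes the world containing it,
if any, and the dummy state otherwise. -/
noncomputable def completedAssign : Assign (completedModel Υ hΥ) := fun t x =>
  if h : ∃ Γ : RW Υ t, Form.svar x ∈ Γ.val then
    ⟨some h.choose, fun hc => (Option.some_ne_none _ hc).elim⟩
  else ⟨none, fun _ => ⟨x, fun Γ hx => h ⟨Γ, hx⟩⟩⟩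

end Completed

section Extension

/-- Extending the language with a countably infinite set of new nominals at each sort. -/
def Lang.addNom (L : Lang Sg) : Lang Sg :=
  { L with NOM := fun s => L.NOM s ⊕ ℕ }

/-- The inclusion of formulas of the original language into the extended language. -/
def Form.mapNom : ∀ {s}, Form Sg L s → Form Sg L.addNom s
  | _, .prop p => .prop p
  | _, .nom j => .nom (Sum.inl j)
  | _, .svar x => .svar x
  | _, .neg φ => .neg φ.mapNom
  | _, .or φ ψ => .or φ.mapNom ψ.mapNom
  | _, .app σ φs => .app σ (fun i => (φs i).mapNom)
  | _, .all x φ => .all x φ.mapNom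

end Extension
/-! ### The many-sorted hybrid modal logic `H_Σ(@_z,∀)` -/

/-- Formulas of the many-sorted hybrid logic `H_Σ(@_z,∀)`, with satisfaction
operators `@_z^s` indexed by state symbols. -/
inductive AForm (Sg : Sig) (L : Lang Sg) : Sg.S → Type where
  | prop {s} : L.PROP s → AForm Sg L s
  | nom {s} : L.NOM s → AForm Sg L s
  | svar {s} : L.SVAR s → AForm Sg L s
  | neg {s} : AForm Sg L s → AForm Sg L s
  | or {s} : AForm Sg L s → AForm Sg L s → AForm Sg L s
  | app (σ : Sg.Op) : (∀ i, AForm Sg L (Sg.arg σ i)) → AForm Sg L (Sg.res σ)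
  | all {s t} : L.SVAR t → AForm Sg L s → AForm Sg L s
  | at_ {s t} : StSym L t → AForm Sg L t → AForm Sg L s

namespace AForm

def imp {s} (φ ψ : AForm Sg L s) : AForm Sg L s := .or (.neg φ) ψ

def and {s} (φ ψ : AForm Sg L s) : AForm Sg L s := .neg (.or (.neg φ) (.neg ψ))

def iff {s} (φ ψ : AForm Sg L s) : AForm Sg L s := and (imp φ ψ) (imp ψ φ)

noncomputable def top (s : Sg.S) : AForm Sg L s :=
  .or (.prop (Classical.choice (L.neP s))) (.neg (.prop (Classical.choice (L.neP s))))

noncomputable def bot (s : Sg.S) : AForm Sg L s := .neg (top s)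

end AForm

/-- A state symbol viewed as a formula. -/
def symForm {t} : StSym L t → AForm Sg L t
  | .inl j => .nom j
  | .inr x => .svar x

/-- The dual modal operator `σ□` for `H_Σ(@_z,∀)`. -/
def dappA (σ : Sg.Op) (φs : ∀ i, AForm Sg L (Sg.arg σ i)) : AForm Sg L (Sg.res σ) :=
  .neg (.app σ fun i => .neg (φs i))

/-- The existential binder for `H_Σ(@_z,∀)`. -/
def exiA {s t} (x : L.SVAR t) (φ : AForm Sg L s) : AForm Sg L s := .neg (.all x (.neg φ))

/-- Free state variables of an `H_Σ(@_z,∀)`-formula. -/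
def freeA : ∀ {s}, AForm Sg L s → Set (Σ u, L.SVAR u)
  | _, .prop _ => ∅
  | _, .nom _ => ∅
  | s, .svar y => {⟨s, y⟩}
  | _, .neg φ => freeA φ
  | _, .or φ ψ => freeA φ ∪ freeA ψ
  | _, .app _ φs => ⋃ i, freeA (φs i)
  | _, .all y φ => freeA φ \ {⟨_, y⟩}
  | _, .at_ z φ =>
      (match z with
        | .inl _ => ∅
        | .inr x => {⟨_, x⟩}) ∪ freeA φ

/-- All state variables occurring in an `H_Σ(@_z,∀)`-formula (free, bound, or as
subscripts of satisfaction operators). -/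
def occA : ∀ {s}, AForm Sg L s → Set (Σ u, L.SVAR u)
  | _, .prop _ => ∅
  | _, .nom _ => ∅
  | s, .svar y => {⟨s, y⟩}
  | _, .neg φ => occA φ
  | _, .or φ ψ => occA φ ∪ occA ψ
  | _, .app _ φs => ⋃ i, occA (φs i)
  | _, .all y φ => insert ⟨_, y⟩ (occA φ)
  | _, .at_ z φ =>
      (match z with
        | .inl _ => ∅
        | .inr x => {⟨_, x⟩}) ∪ occA φ

/-- Substitution of the formula `ζ` for free occurrences of the state variable `x`. -/
noncomputable def substA {t : Sg.S} (x : L.SVAR t) (ζ : AForm Sg L t) :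
    ∀ {s}, AForm Sg L s → AForm Sg L s
  | _, .prop p => .prop p
  | _, .nom j => .nom j
  | s, .svar y =>
      if h : (⟨s, y⟩ : Σ u, L.SVAR u) = ⟨t, x⟩ then
        cast (congrArg (AForm Sg L) (congrArg Sigma.fst h)).symm ζ
      else .svar y
  | _, .neg φ => .neg (substA x ζ φ)
  | _, .or φ ψ => .or (substA x ζ φ) (substA x ζ ψ)
  | _, .app σ φs => .app σ (fun i => substA x ζ (φs i))
  | s, .all y φ =>
      if (⟨_, y⟩ : Σ u, L.SVAR u) = ⟨t, x⟩ then .all y φ else .all y (substA x ζ φ)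
  | _, .at_ z φ => .at_ z (substA x ζ φ)

/-- Substitutability of the state variable `y` for `x` in an `H_Σ(@_z,∀)`-formula. -/
def SubstitutableA {t u : Sg.S} (x : L.SVAR t) (y : L.SVAR u) : ∀ {s}, AForm Sg L s → Prop
  | _, .prop _ => True
  | _, .nom _ => True
  | _, .svar _ => True
  | _, .neg φ => SubstitutableA x y φ
  | _, .or φ ψ => SubstitutableA x y φ ∧ SubstitutableA x y ψ
  | _, .app _ φs => ∀ i, SubstitutableA x y (φs i)
  | _, .all z φ =>
      (⟨t, x⟩ : Σ v, L.SVAR v) ∉ freeA (AForm.all z φ) ∨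
      ((⟨_, z⟩ : Σ v, L.SVAR v) ≠ ⟨u, y⟩ ∧ SubstitutableA x y φ)
  | _, .at_ _ φ => SubstitutableA x y φ

/-- The denotation `Den_g(z)` of a state symbol: the unique element of `V(z)` for a
nominal (in a standard model), and `g(z)` for a state variable. -/
noncomputable def den (M : Model Sg L) (g : Assign M) {t} : StSym L t → M.W t
  | .inl j => if h : ∃ v, M.Vn t j = {v} then h.choose else Classical.choice (M.ne t)
  | .inr x => g t x

/-- The satisfaction relation of `H_Σ(@_z,∀)`. -/
def SatA (M : Model Sg L) : ∀ {s}, Assign M → AForm Sg L s → M.W s → Prop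
  | s, _, .prop p, w => w ∈ M.Vp s p
  | s, _, .nom j, w => w ∈ M.Vn s j
  | s, g, .svar x, w => w = g s x
  | _, g, .neg φ, w => ¬ SatA M g φ w
  | _, g, .or φ ψ, w => SatA M g φ w ∨ SatA M g ψ w
  | _, g, .app σ φs, w => ∃ ws, M.R σ w ws ∧ ∀ i, SatA M g (φs i) (ws i)
  | _, g, .all x φ, w => ∀ g', Variant g g' x → SatA M g' φ w
  | _, g, .at_ z φ, _ => SatA M g φ (den M g z)

/-- A model with assignment is named if every world is the denotation of a state symbol. -/
def NamedM (M : Model Sg L) (g : Assign M) : Prop :=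
  ∀ (t) (w : M.W t), ∃ z : StSym L t, den M g z = w

/-- Instantiation of a propositional skeleton by `H_Σ(@_z,∀)`-formulas. -/
def PForm.instA {s} (f : ℕ → AForm Sg L s) : PForm → AForm Sg L s
  | .atom n => f n
  | .neg p => .neg (p.instA f)
  | .or p q => .or (p.instA f) (q.instA f)

/-- The deductive system of `H_Σ(@_z,∀)`, extended with a set `Λ` of additional axioms. -/
inductive PrfAt (Λ : ∀ t, Set (AForm Sg L t)) : ∀ {s : Sg.S}, AForm Sg L s → Prop where
  | hyp {s} {φ : AForm Sg L s} : φ ∈ Λ s → PrfAt Λ φ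
  | taut {s} (p : PForm) (f : ℕ → AForm Sg L s) : p.Taut → PrfAt Λ (p.instA f)
  | kax (σ : Sg.Op) (i : Fin (Sg.n σ)) (φs : ∀ j, AForm Sg L (Sg.arg σ j))
      (φ χ : AForm Sg L (Sg.arg σ i)) :
      PrfAt Λ (AForm.imp (dappA σ (Function.update φs i (AForm.imp φ χ)))
        (AForm.imp (dappA σ (Function.update φs i φ)) (dappA σ (Function.update φs i χ))))
  | dualax (σ : Sg.Op) (φs : ∀ j, AForm Sg L (Sg.arg σ j)) :
      PrfAt Λ (AForm.iff (.app σ φs) (.neg (dappA σ fun j => .neg (φs j))))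
  | kat {s t} (z : StSym L t) (φ ψ : AForm Sg L t) :
      PrfAt Λ (AForm.imp (.at_ (s := s) z (AForm.imp φ ψ))
        (AForm.imp (.at_ (s := s) z φ) (.at_ (s := s) z ψ)))
  | agree {t t' u} (y : StSym L t') (z : StSym L u) (φ : AForm Sg L u) :
      PrfAt Λ (AForm.iff (.at_ (s := t) y (.at_ (s := t') z φ)) (.at_ (s := t) z φ))
  | selfdual {s t} (z : StSym L t) (φ : AForm Sg L t) :
      PrfAt Λ (AForm.iff (.at_ (s := s) z φ) (.neg (.at_ (s := s) z (.neg φ))))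
  | intro {s} (z : StSym L s) (φ : AForm Sg L s) :
      PrfAt Λ (AForm.imp (symForm z) (AForm.iff φ (.at_ (s := s) z φ)))
  | back (σ : Sg.Op) (i : Fin (Sg.n σ)) (φs : ∀ j, AForm Sg L (Sg.arg σ j))
      {t} (z : StSym L t) (ψ : AForm Sg L t) :
      PrfAt Λ (AForm.imp (.app σ (Function.update φs i (.at_ (s := Sg.arg σ i) z ψ)))
        (.at_ (s := Sg.res σ) z ψ))
  | ref {s t} (z : StSym L t) : PrfAt Λ (.at_ (s := s) z (symForm z))
  | q1 {s t} (x : L.SVAR t) (φ ψ : AForm Sg L s)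
      (hx : (⟨t, x⟩ : Σ v, L.SVAR v) ∉ freeA φ) :
      PrfAt Λ (AForm.imp (.all x (AForm.imp φ ψ)) (AForm.imp φ (.all x ψ)))
  | q2v {s t} (x y : L.SVAR t) (φ : AForm Sg L s) (h : SubstitutableA x y φ) :
      PrfAt Λ (AForm.imp (.all x φ) (substA x (.svar y) φ))
  | q2n {s t} (x : L.SVAR t) (j : L.NOM t) (φ : AForm Sg L s) :
      PrfAt Λ (AForm.imp (.all x φ) (substA x (.nom j) φ))
  | nameax {s} (x : L.SVAR s) : PrfAt Λ (exiA x (AForm.svar x))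
  | barcan (σ : Sg.Op) (i : Fin (Sg.n σ)) {t} (x : L.SVAR t)
      (φs : ∀ j, AForm Sg L (Sg.arg σ j)) :
      PrfAt Λ (AForm.imp (.all x (dappA σ φs)) (dappA σ (Function.update φs i (.all x (φs i)))))
  | barcanAt {s t u} (x : L.SVAR t) (z : StSym L u) (φ : AForm Sg L u)
      (h : (⟨u, z⟩ : Σ v, StSym L v) ≠ ⟨t, Sum.inr x⟩) :
      PrfAt Λ (AForm.imp (.all x (.at_ (s := s) z φ)) (.at_ (s := s) z (.all x φ)))
  | nomx {s u} (z y : StSym L u) (x : L.SVAR u) :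
      PrfAt Λ (AForm.imp (AForm.and (.at_ (s := s) z (.svar x)) (.at_ (s := s) y (.svar x)))
        (.at_ (s := s) z (symForm y)))
  | mp {s} {φ ψ : AForm Sg L s} : PrfAt Λ (AForm.imp φ ψ) → PrfAt Λ φ → PrfAt Λ ψ
  | ug (σ : Sg.Op) (i : Fin (Sg.n σ)) (φs : ∀ j, AForm Sg L (Sg.arg σ j))
      {φ : AForm Sg L (Sg.arg σ i)} : PrfAt Λ φ → PrfAt Λ (dappA σ (Function.update φs i φ))
  | gen {s t} (x : L.SVAR t) {φ : AForm Sg L s} : PrfAt Λ φ → PrfAt Λ (.all x φ)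
  | broadcast {s s' t} (z : StSym L t) (φ : AForm Sg L t) :
      PrfAt Λ (.at_ (s := s) z φ) → PrfAt Λ (.at_ (s := s') z φ)
  | genAt {s t} (z : StSym L t) {φ : AForm Sg L t} :
      PrfAt Λ φ → PrfAt Λ (.at_ (s := s) z φ)
  | paste0 {s u} (z : StSym L u) (y : L.SVAR u) (φ : AForm Sg L u) (ψ : AForm Sg L s)
      (hzy : z ≠ .inr y) (hyφ : (⟨u, y⟩ : Σ v, L.SVAR v) ∉ occA φ)
      (hyψ : (⟨u, y⟩ : Σ v, L.SVAR v) ∉ occA ψ) :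
      PrfAt Λ (AForm.imp (.at_ (s := s) z (AForm.and (.svar y) φ)) ψ) →
      PrfAt Λ (AForm.imp (.at_ (s := s) z φ) ψ)
  | paste1 {s} (σ : Sg.Op) (i : Fin (Sg.n σ)) (φs : ∀ j, AForm Sg L (Sg.arg σ j))
      (z : StSym L (Sg.res σ)) (y : L.SVAR (Sg.arg σ i)) (ψ : AForm Sg L s)
      (hzy : (⟨Sg.res σ, z⟩ : Σ v, StSym L v) ≠ ⟨Sg.arg σ i, Sum.inr y⟩)
      (hyφ : (⟨Sg.arg σ i, y⟩ : Σ v, L.SVAR v) ∉ occA (φs i))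
      (hyψ : (⟨Sg.arg σ i, y⟩ : Σ v, L.SVAR v) ∉ occA ψ) :
      PrfAt Λ (AForm.imp
        (.at_ (s := s) z (.app σ (Function.update φs i (AForm.and (.svar y) (φs i))))) ψ) →
      PrfAt Λ (AForm.imp (.at_ (s := s) z (.app σ φs)) ψ)

/-- Conjunction of a list of `H_Σ(@_z,∀)`-formulas. -/
noncomputable def conjA {s} : List (AForm Sg L s) → AForm Sg L s
  | [] => AForm.top s
  | φ :: l => AForm.and φ (conjA l)

/-- Consistency with respect to `H_Σ(@_z,∀)` extended with the axioms `Λ`. -/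
def ConsistentA (Λ : ∀ t, Set (AForm Sg L t)) {s} (Γ : Set (AForm Sg L s)) : Prop :=
  ¬ ∃ l : List (AForm Sg L s), (∀ φ ∈ l, φ ∈ Γ) ∧ PrfAt Λ (AForm.imp (conjA l) (AForm.bot s))

/-- Maximal consistent sets for `H_Σ(@_z,∀)` extended with `Λ`. -/
def MaxConsistentA (Λ : ∀ t, Set (AForm Sg L t)) {s} (Γ : Set (AForm Sg L s)) : Prop :=
  ConsistentA Λ Γ ∧ ∀ Δ, ConsistentA Λ Δ → Γ ⊆ Δ → Δ = Γ

/-- The empty set of extra axioms: the plain system `H_Σ(@_z,∀)`. -/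
def noAx : ∀ t, Set (AForm Sg L t) := fun _ => ∅

/-- A set of formulas is named if one of its elements is a nominal. -/
def NamedSet {s} (Γ : Set (AForm Sg L s)) : Prop := ∃ j : L.NOM s, AForm.nom j ∈ Γ

/-- `Γ` is 0-pasted. -/
def Pasted0 {s} (Γ : Set (AForm Sg L s)) : Prop :=
  ∀ {u} (z : StSym L u) (φ : AForm Sg L u), AForm.at_ (s := s) z φ ∈ Γ →
    ∃ j : L.NOM u, AForm.at_ (s := s) z (AForm.and (.nom j) φ) ∈ Γ

/-- `Γ` is 1-pasted. -/
def Pasted1 {s} (Γ : Set (AForm Sg L s)) : Prop :=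
  ∀ (σ : Sg.Op) (i : Fin (Sg.n σ)) (z : StSym L (Sg.res σ))
    (φs : ∀ j, AForm Sg L (Sg.arg σ j)), AForm.at_ (s := s) z (.app σ φs) ∈ Γ →
    ∃ j : L.NOM (Sg.arg σ i),
      AForm.at_ (s := s) z (.app σ (Function.update φs i (AForm.and (.nom j) (φs i)))) ∈ Γ

/-- `Γ` is pasted: both 0-pasted and 1-pasted. -/
def PastedSet {s} (Γ : Set (AForm Sg L s)) : Prop := Pasted0 Γ ∧ Pasted1 Γ

/-- `Γ` is `@`-witnessed. -/
def AtWitnessed {s} (Γ : Set (AForm Sg L s)) : Prop :=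
  (∀ {u t} (k : L.NOM u) (x : L.SVAR t) (φ : AForm Sg L u),
      AForm.at_ (s := s) (Sum.inl k) (exiA x φ) ∈ Γ →
      ∃ j : L.NOM t, AForm.at_ (s := s) (Sum.inl k) (substA x (.nom j) φ) ∈ Γ) ∧
  (∀ {t} (x : L.SVAR t), ∃ j : L.NOM t, AForm.at_ (s := s) (Sum.inl j) (AForm.svar x) ∈ Γ)

/-- `Δ_z`: the set of formulas holding at the state named by `z`, relative to a
maximal consistent set `Γ` of sort `s`. -/
def DeltaS {s} (Γ : Set (AForm Sg L s)) {u} (z : StSym L u) : Set (AForm Sg L u) :=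
  {φ | AForm.at_ (s := s) z φ ∈ Γ}

/-- The canonical relation for `H_Σ(@_z,∀)`. -/
def CanRA (σ : Sg.Op) (w : Set (AForm Sg L (Sg.res σ)))
    (us : ∀ i, Set (AForm Sg L (Sg.arg σ i))) : Prop :=
  ∀ ψs : ∀ i, AForm Sg L (Sg.arg σ i), (∀ i, ψs i ∈ us i) → AForm.app σ ψs ∈ w

section NamedModel

variable (Γf : ∀ t, Set (AForm Sg L t))

/-- `Δ_z` relative to an `S`-sorted family of maximal consistent sets. -/
def DeltaF {u} (z : StSym L u) : Set (AForm Sg L u) :=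
  {φ | AForm.at_ (s := u) z φ ∈ Γf u}

/-- Worlds of sort `t` of the named model generated by `Γf`: the sets `Δ_z`. -/
def NW (t : Sg.S) : Type := {Δ : Set (AForm Sg L t) // ∃ z : StSym L t, Δ = DeltaF Γf z}

/-- The named model generated by a named, pasted and `@`-witnessed family. -/
noncomputable def namedModel : Model Sg L where
  W := NW Γf
  ne := fun t => ⟨⟨DeltaF Γf (Sum.inr (Classical.choice (L.neS t))), ⟨_, rfl⟩⟩⟩
  R := fun σ w ws => CanRA σ w.val (fun i => (ws i).val)
  Vp := fun _ p => {w | AForm.prop p ∈ w.val}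
  Vn := fun _ j => {w | AForm.nom j ∈ w.val}

/-- The natural assignment of the named model: each state variable denotes the
world containing it. -/
noncomputable def naturalAssign : Assign (namedModel Γf) := fun t x =>
  if h : ∃ w : NW Γf t, AForm.svar x ∈ w.val then h.choose
  else Classical.choice ((namedModel Γf).ne t)

end NamedModel

/-- The inclusion of `H_Σ(@_z,∀)`-formulas into the language extended with new nominals. -/
def AForm.mapNom : ∀ {s}, AForm Sg L s → AForm Sg L.addNom s
  | _, .prop p => .prop p
  | _, .nom j => .nom (Sum.inl j)
  | _, .svar x => .svar x
  | _, .neg φ => .neg φ.mapNom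
  | _, .or φ ψ => .or φ.mapNom ψ.mapNom
  | _, .app σ φs => .app σ (fun i => (φs i).mapNom)
  | _, .all x φ => .all x φ.mapNom
  | _, .at_ z φ => .at_ (Sum.map Sum.inl id z) φ.mapNom
/-! ### Matching logic -/

/-- Matching logic patterns over a signature (with state/element variables `SV`),
built from variables, `¬`, `∨`, the symbols of the signature, and `∃`.
These coincide with the hybrid formulas `Form⁰` containing no nominals and no
propositional variables. -/
inductive Pat (Sg : Sig) (SV : Sg.S → Type) : Sg.S → Type where
  | svar {s} : SV s → Pat Sg SV s
  | neg {s} : Pat Sg SV s → Pat Sg SV s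
  | or {s} : Pat Sg SV s → Pat Sg SV s → Pat Sg SV s
  | app (σ : Sg.Op) : (∀ i, Pat Sg SV (Sg.arg σ i)) → Pat Sg SV (Sg.res σ)
  | ex {s t} : SV t → Pat Sg SV s → Pat Sg SV s

namespace Pat

variable {SV : Sg.S → Type}

def imp {s} (φ ψ : Pat Sg SV s) : Pat Sg SV s := .or (.neg φ) ψ

def and {s} (φ ψ : Pat Sg SV s) : Pat Sg SV s := .neg (.or (.neg φ) (.neg ψ))

def iff {s} (φ ψ : Pat Sg SV s) : Pat Sg SV s := and (imp φ ψ) (imp ψ φ)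

end Pat

/-- A matching logic model: nonempty carriers and powerset-valued interpretations. -/
structure MLModel (Sg : Sig) : Type 1 where
  M : Sg.S → Type
  ne : ∀ s, Nonempty (M s)
  interp : ∀ σ : Sg.Op, (∀ i, M (Sg.arg σ i)) → Set (M (Sg.res σ))

/-- An `M`-valuation of the element variables. -/
def Valu {Sg : Sig} (SV : Sg.S → Type) (K : MLModel Sg) := ∀ s, SV s → K.M s

/-- Valuations agreeing except possibly at `x`. -/
def VariantV {SV : Sg.S → Type} {K : MLModel Sg} (ρ ρ' : Valu SV K) {t} (x : SV t) : Prop :=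
  ∀ (u) (y : SV u), (⟨u, y⟩ : Σ v, SV v) ≠ ⟨t, x⟩ → ρ u y = ρ' u y

/-- The extension `ρ̄` of a valuation to all patterns (the pointwise extension is
used for the symbols, and `ρ̄(∃x.φ) = ⋃_a ρ̄[a/x](φ)`). -/
def extV {SV : Sg.S → Type} (K : MLModel Sg) : ∀ {s}, Valu SV K → Pat Sg SV s → Set (K.M s)
  | s, ρ, .svar x => {ρ s x}
  | _, ρ, .neg φ => (extV K ρ φ)ᶜ
  | _, ρ, .or φ ψ => extV K ρ φ ∪ extV K ρ ψ
  | _, ρ, .app σ φs => {m | ∃ as, (∀ i, as i ∈ extV K ρ (φs i)) ∧ m ∈ K.interp σ as}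
  | _, ρ, .ex x φ => {m | ∃ ρ', VariantV ρ ρ' x ∧ m ∈ extV K ρ' φ}

/-- `(M,ρ) ⊨^{ML}_s φ` : the pattern `φ` is matched by every element. -/
def MLSat {SV : Sg.S → Type} (K : MLModel Sg) (ρ : Valu SV K) {s} (φ : Pat Sg SV s) : Prop :=
  extV K ρ φ = Set.univ

/-- A hybrid-logic `(S,Σ)`-frame (no valuation needed for `Form⁰`-formulas). -/
structure Frame (Sg : Sig) : Type 1 where
  W : Sg.S → Type
  ne : ∀ s, Nonempty (W s)
  R : ∀ σ : Sg.Op, W (Sg.res σ) → (∀ i, W (Sg.arg σ i)) → Prop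

/-- An assignment into a frame. -/
def FAssign {Sg : Sig} (SV : Sg.S → Type) (F : Frame Sg) := ∀ s, SV s → F.W s

/-- Frame assignments agreeing except possibly at `x`. -/
def FVariant {SV : Sg.S → Type} {F : Frame Sg} (g g' : FAssign SV F) {t} (x : SV t) : Prop :=
  ∀ (u) (y : SV u), (⟨u, y⟩ : Σ v, SV v) ≠ ⟨t, x⟩ → g u y = g' u y

/-- Hybrid (modal) satisfaction of `Form⁰`-formulas in a frame with an assignment. -/
def SatP {SV : Sg.S → Type} (F : Frame Sg) : ∀ {s}, FAssign SV F → Pat Sg SV s → F.W s → Prop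
  | s, g, .svar x, w => w = g s x
  | _, g, .neg φ, w => ¬ SatP F g φ w
  | _, g, .or φ ψ, w => SatP F g φ w ∨ SatP F g ψ w
  | _, g, .app σ φs, w => ∃ ws, F.R σ w ws ∧ ∀ i, SatP F g (φs i) (ws i)
  | _, g, .ex x φ, w => ∃ g', FVariant g g' x ∧ SatP F g' φ w

/-- The hybrid frame associated to a matching logic model. -/
def frameOf (K : MLModel Sg) : Frame Sg where
  W := K.M
  ne := K.ne
  R := fun σ w ws => w ∈ K.interp σ ws

/-- The matching logic model associated to a hybrid frame. -/
def mlOf (F : Frame Sg) : MLModel Sg where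
  M := F.W
  ne := F.ne
  interp := fun σ ws => {w | F.R σ w ws}

/-- `Form⁰`-formulas (patterns) as formulas of the hybrid logic `H_Σ(∀)`,
with `∃xφ := ¬∀x¬φ`. -/
def Pat.toForm : ∀ {s}, Pat Sg L.SVAR s → Form Sg L s
  | _, .svar x => .svar x
  | _, .neg φ => .neg φ.toForm
  | _, .or φ ψ => .or φ.toForm ψ.toForm
  | _, .app σ φs => .app σ (fun i => (φs i).toForm)
  | _, .ex x φ => exi x φ.toForm

/-! #### The signature `Σ'` with constants for propositional variables and nominals,
and definedness symbols -/

/-- Extra symbols of `Σ'`: a constant `c_p` for each propositional variable `p`, a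
constant `c_i` for each nominal `i`, and a definedness symbol `⌈_⌉^{s₂}_{s₁}` for
every pair of sorts. -/
inductive ExtraOp (Sg : Sig) (L : Lang Sg) : Type where
  | cP : (Σ t, L.PROP t) → ExtraOp Sg L
  | cN : (Σ t, L.NOM t) → ExtraOp Sg L
  | defin : Sg.S → Sg.S → ExtraOp Sg L

/-- The extended signature `Σ' = Σ ∪ Σ_PROP ∪ Σ_NOM` (together with definedness symbols). -/
def SigC (Sg : Sig) (L : Lang Sg) : Sig where
  S := Sg.S
  Op := Sg.Op ⊕ ExtraOp Sg L
  n := fun σ => match σ with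
    | .inl σ => Sg.n σ
    | .inr (.cP _) => 0
    | .inr (.cN _) => 0
    | .inr (.defin _ _) => 1
  arg := fun σ => match σ with
    | .inl σ => Sg.arg σ
    | .inr (.cP _) => Fin.elim0
    | .inr (.cN _) => Fin.elim0
    | .inr (.defin s1 _) => fun _ => s1
  res := fun σ => match σ with
    | .inl σ => Sg.res σ
    | .inr (.cP c) => c.1
    | .inr (.cN c) => c.1
    | .inr (.defin _ s2) => s2

/-- The definedness pattern `⌈φ⌉^{s₂}_{s₁}`. -/
def defP {s1 : Sg.S} (s2 : Sg.S) (φ : Pat (SigC Sg L) L.SVAR s1) : Pat (SigC Sg L) L.SVAR s2 :=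
  .app (Sg := SigC Sg L) (Sum.inr (ExtraOp.defin s1 s2)) (fun _ => φ)

/-- The equality pattern `φ =^{s₂}_{s₁} φ' := ⌊φ ↔ φ'⌋^{s₂}_{s₁}`. -/
def eqP {s1 : Sg.S} (s2 : Sg.S) (φ ψ : Pat (SigC Sg L) L.SVAR s1) : Pat (SigC Sg L) L.SVAR s2 :=
  .neg (defP s2 (.neg (Pat.iff φ ψ)))

/-- The constant pattern `c_i` for a nominal `i`. -/
def cNom {t : Sg.S} (i : L.NOM t) : Pat (SigC Sg L) L.SVAR t :=
  .app (Sg := SigC Sg L) (Sum.inr (ExtraOp.cN ⟨t, i⟩)) (fun h => Fin.elim0 h)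

/-- The constant pattern `c_p` for a propositional variable `p`. -/
def cProp {t : Sg.S} (p : L.PROP t) : Pat (SigC Sg L) L.SVAR t :=
  .app (Sg := SigC Sg L) (Sum.inr (ExtraOp.cP ⟨t, p⟩)) (fun h => Fin.elim0 h)

/-- A state symbol as a pattern over `Σ'`. -/
def symPat {t : Sg.S} : StSym L t → Pat (SigC Sg L) L.SVAR t
  | .inl j => cNom j
  | .inr x => .svar x

/-- The translation `φ ↦ φ'` of `H_Σ(@_z,∀)`-formulas into matching logic patterns
over `Σ'`: propositional variables and nominals become constants, `∀x := ¬∃x¬`, and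
`@_z^s φ := ⌈z ∧ φ⌉^s`. -/
def AForm.toPat : ∀ {s}, AForm Sg L s → Pat (SigC Sg L) L.SVAR s
  | _, .prop p => cProp p
  | _, .nom j => cNom j
  | _, .svar x => .svar x
  | _, .neg φ => .neg φ.toPat
  | _, .or φ ψ => .or φ.toPat ψ.toPat
  | _, .app σ φs => .app (Sg := SigC Sg L) (Sum.inl σ) (fun i => (φs i).toPat)
  | _, .all x φ => .neg (.ex x (.neg φ.toPat))
  | s, .at_ (t := t) z φ => defP s (Pat.and (symPat z) φ.toPat)

/-- A matching logic model over `Σ'` interprets definedness correctly if each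
definedness symbol applied to any element yields the whole carrier. -/
def DefOK (K : MLModel (SigC Sg L)) : Prop :=
  ∀ (s1 s2 : Sg.S) (as : ∀ i : Fin 1, K.M s1), K.interp (Sum.inr (ExtraOp.defin s1 s2)) as = Set.univ

/-- The theory `Γ' = {∃x (x = c_i) : i ∈ NOM}` (at every context sort), forcing the
nominal constants to be functional (singleton) patterns. -/
def GammaC (Sg : Sig) (L : Lang Sg) : ∀ s2 : Sg.S, Set (Pat (SigC Sg L) L.SVAR s2) :=
  fun s2 => {χ | ∃ (t : Sg.S) (i : L.NOM t) (x : L.SVAR t),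
    χ = Pat.ex (Sg := SigC Sg L) x (eqP s2 (.svar x) (cNom i))}

/-- A matching logic model satisfies the theory `Γ'`. -/
def SatGammaC (K : MLModel (SigC Sg L)) : Prop :=
  ∀ (s2 : Sg.S), ∀ χ ∈ GammaC Sg L s2, ∀ ρ : Valu (Sg := SigC Sg L) L.SVAR K, extV K ρ χ = Set.univ

/-!
If `Γ` is reached from `Υ` along the canonical relations, a nominal context `η` with
`η[ψ] ∈ Υ` for all `ψ ∈ Γ` is read off the path, where each step plugs `ψ` into one argument
of `σ` and `⊤` into the others. For `Γ, Δ` reachable from `Υ` and containing `x`, take such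
contexts `η` (for `Γ`) and `θ` (for `Δ`). For `φ ∈ Γ` we get `η[x ∧ φ] ∈ Υ`, so the instance
of (Nom) at `x` itself puts `θ□[x → φ]` in `Υ`; if `x → φ ∉ Δ` then `¬(x → φ) ∈ Δ` and
`θ[¬(x → φ)] ∈ Υ`, contradicting the consistency of `Υ`. Hence `Γ ⊆ Δ`, and maximality of
`Γ` gives `Γ = Δ`.
-/

namespace PForm

def imp (p q : PForm) : PForm := .or (.neg p) q

def and (p q : PForm) : PForm := .neg (.or (.neg p) (.neg q))

def top : PForm := .or (.atom 3) (.neg (.atom 3))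

def bot : PForm := .neg top

end PForm

section Propositional

variable {s : Sg.S} {a b c : Form Sg L s}

/-- Atom `3` goes to the propositional variable underlying `Form.top`, so that `PForm.top` and
`PForm.bot` instantiate to `Form.top s` and `Form.bot s`. -/
noncomputable def tautInst (a b c : Form Sg L s) : ℕ → Form Sg L s
  | 0 => a
  | 1 => b
  | 2 => c
  | _ => .prop (Classical.choice (L.neP s))

theorem Prf.top : Prf (Form.top (L := L) s) := by
  refine Prf.taut PForm.top (tautInst (Form.top s) (Form.top s) (Form.top s)) fun v => ?_
  simp only [PForm.eval, PForm.top]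
  cases v 3 <;> rfl

theorem Prf.imp_of (hb : Prf b) : Prf (Form.imp a b) := by
  refine Prf.mp (Prf.taut (.imp (.atom 1) (.imp (.atom 0) (.atom 1))) (tautInst a b b)
    fun v => ?_) hb
  simp only [PForm.eval, PForm.imp]
  cases v 0 <;> cases v 1 <;> rfl

theorem Prf.imp_trans (hab : Prf (Form.imp a b)) (hbc : Prf (Form.imp b c)) :
    Prf (Form.imp a c) := by
  refine Prf.mp (Prf.mp (Prf.taut
    (.imp (.imp (.atom 0) (.atom 1)) (.imp (.imp (.atom 1) (.atom 2)) (.imp (.atom 0) (.atom 2))))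
    (tautInst a b c) fun v => ?_) hab) hbc
  simp only [PForm.eval, PForm.imp]
  cases v 0 <;> cases v 1 <;> cases v 2 <;> rfl

theorem Prf.and_left : Prf (Form.imp (Form.and a b) a) := by
  refine Prf.taut (.imp (.and (.atom 0) (.atom 1)) (.atom 0)) (tautInst a b b) fun v => ?_
  simp only [PForm.eval, PForm.imp, PForm.and]
  cases v 0 <;> cases v 1 <;> rfl

theorem Prf.and_right : Prf (Form.imp (Form.and a b) b) := by
  refine Prf.taut (.imp (.and (.atom 0) (.atom 1)) (.atom 1)) (tautInst a b b) fun v => ?_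
  simp only [PForm.eval, PForm.imp, PForm.and]
  cases v 0 <;> cases v 1 <;> rfl

theorem Prf.imp_and (hca : Prf (Form.imp c a)) (hcb : Prf (Form.imp c b)) :
    Prf (Form.imp c (Form.and a b)) := by
  refine Prf.mp (Prf.mp (Prf.taut
    (.imp (.imp (.atom 2) (.atom 0)) (.imp (.imp (.atom 2) (.atom 1))
      (.imp (.atom 2) (.and (.atom 0) (.atom 1)))))
    (tautInst a b c) fun v => ?_) hca) hcb
  simp only [PForm.eval, PForm.imp, PForm.and]
  cases v 0 <;> cases v 1 <;> cases v 2 <;> rfl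

theorem Prf.imp_mp (hcab : Prf (Form.imp c (Form.imp a b))) (hca : Prf (Form.imp c a)) :
    Prf (Form.imp c b) := by
  refine Prf.mp (Prf.mp (Prf.taut
    (.imp (.imp (.atom 2) (.imp (.atom 0) (.atom 1))) (.imp (.imp (.atom 2) (.atom 0))
      (.imp (.atom 2) (.atom 1))))
    (tautInst a b c) fun v => ?_) hcab) hca
  simp only [PForm.eval, PForm.imp]
  cases v 0 <;> cases v 1 <;> cases v 2 <;> rfl

theorem Prf.imp_bot_of_imp_of_imp_neg (hca : Prf (Form.imp c a))
    (hcna : Prf (Form.imp c (.neg a))) : Prf (Form.imp c (Form.bot s)) := by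
  refine Prf.mp (Prf.mp (Prf.taut
    (.imp (.imp (.atom 2) (.atom 0)) (.imp (.imp (.atom 2) (.neg (.atom 0)))
      (.imp (.atom 2) .bot)))
    (tautInst a a c) fun v => ?_) hca) hcna
  simp only [PForm.eval, PForm.imp, PForm.bot, PForm.top]
  cases v 0 <;> cases v 2 <;> cases v 3 <;> rfl

theorem Prf.imp_neg_of_and_imp_bot (h : Prf (Form.imp (Form.and a c) (Form.bot s))) :
    Prf (Form.imp c (.neg a)) := by
  refine Prf.mp (Prf.taut
    (.imp (.imp (.and (.atom 0) (.atom 2)) .bot) (.imp (.atom 2) (.neg (.atom 0))))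
    (tautInst a a c) fun v => ?_) h
  simp only [PForm.eval, PForm.imp, PForm.and, PForm.bot, PForm.top]
  cases v 0 <;> cases v 2 <;> cases v 3 <;> rfl

theorem Prf.imp_conj_of_mem {l : List (Form Sg L s)} (h : a ∈ l) : Prf (Form.imp (conj l) a) := by
  induction l with
  | nil => cases h
  | cons b l ih =>
    rcases List.mem_cons.mp h with rfl | h
    · exact Prf.and_left
    · exact Prf.imp_trans Prf.and_right (ih h)

theorem Prf.imp_conj {l : List (Form Sg L s)} (h : ∀ b ∈ l, Prf (Form.imp c b)) :
    Prf (Form.imp c (conj l)) := by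
  induction l with
  | nil => exact Prf.imp_of Prf.top
  | cons b l ih =>
    exact Prf.imp_and (h b List.mem_cons_self) (ih fun b hb => h b (List.mem_cons_of_mem _ hb))

end Propositional

section MaxConsistent

variable {s : Sg.S} {Γ : Set (Form Sg L s)} {φ ψ : Form Sg L s}

theorem exists_conj_imp_neg_of_not_consistent_insert (h : ¬ Consistent (insert φ Γ)) :
    ∃ l : List (Form Sg L s), (∀ ψ ∈ l, ψ ∈ Γ) ∧ Prf (Form.imp (conj l) (.neg φ)) := by
  obtain ⟨l, hl, hbot⟩ := not_not.mp h
  refine ⟨l.filter (· ∈ Γ), fun ψ hψ => of_decide_eq_true (List.mem_filter.mp hψ).2, ?_⟩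
  refine Prf.imp_neg_of_and_imp_bot (Prf.imp_trans (Prf.imp_conj fun ψ hψ => ?_) hbot)
  rcases hl ψ hψ with rfl | hψΓ
  · exact Prf.and_left
  · exact Prf.imp_trans Prf.and_right
      (Prf.imp_conj_of_mem (List.mem_filter.mpr ⟨hψ, decide_eq_true hψΓ⟩))

namespace MaxConsistent

theorem not_consistent_insert (hΓ : MaxConsistent Γ) (hφ : φ ∉ Γ) :
    ¬ Consistent (insert φ Γ) := fun hc =>
  hφ (hΓ.2 _ hc (Set.subset_insert φ Γ) ▸ Set.mem_insert φ Γ)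

theorem mem_of_prf_conj_imp (hΓ : MaxConsistent Γ) {l : List (Form Sg L s)}
    (hl : ∀ φ ∈ l, φ ∈ Γ) (h : Prf (Form.imp (conj l) ψ)) : ψ ∈ Γ := by
  by_contra hψ
  obtain ⟨l', hl', hneg⟩ :=
    exists_conj_imp_neg_of_not_consistent_insert (hΓ.not_consistent_insert hψ)
  refine hΓ.1 ⟨l ++ l', fun φ hφ => (List.mem_append.mp hφ).elim (hl φ) (hl' φ), ?_⟩
  exact Prf.imp_bot_of_imp_of_imp_neg
    (Prf.imp_trans (Prf.imp_conj fun φ hφ => Prf.imp_conj_of_mem (List.mem_append_left _ hφ)) h)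
    (Prf.imp_trans (Prf.imp_conj fun φ hφ => Prf.imp_conj_of_mem (List.mem_append_right _ hφ))
      hneg)

theorem mem_of_prf (hΓ : MaxConsistent Γ) (h : Prf ψ) : ψ ∈ Γ :=
  hΓ.mem_of_prf_conj_imp (l := []) (by simp) (Prf.imp_of h)

theorem mem_of_prf_imp (hΓ : MaxConsistent Γ) (h : Prf (Form.imp φ ψ)) (hφ : φ ∈ Γ) : ψ ∈ Γ :=
  hΓ.mem_of_prf_conj_imp (l := [φ]) (by simpa using hφ)
    (Prf.imp_trans (Prf.imp_conj_of_mem List.mem_cons_self) h)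

theorem mem_of_imp_mem (hΓ : MaxConsistent Γ) (himp : Form.imp φ ψ ∈ Γ) (hφ : φ ∈ Γ) :
    ψ ∈ Γ :=
  hΓ.mem_of_prf_conj_imp (l := [Form.imp φ ψ, φ]) (by simp [himp, hφ])
    (Prf.imp_mp (Prf.imp_conj_of_mem List.mem_cons_self)
      (Prf.imp_conj_of_mem (List.mem_cons_of_mem _ List.mem_cons_self)))

theorem and_mem (hΓ : MaxConsistent Γ) (hφ : φ ∈ Γ) (hψ : ψ ∈ Γ) : Form.and φ ψ ∈ Γ :=
  hΓ.mem_of_prf_conj_imp (l := [φ, ψ]) (by simp [hφ, hψ])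
    (Prf.imp_and (Prf.imp_conj_of_mem List.mem_cons_self)
      (Prf.imp_conj_of_mem (List.mem_cons_of_mem _ List.mem_cons_self)))

theorem not_mem_neg_of_mem (hΓ : MaxConsistent Γ) (hφ : φ ∈ Γ) : Form.neg φ ∉ Γ := fun hnφ =>
  hΓ.1 ⟨[φ, .neg φ], by simp [hφ, hnφ], Prf.imp_bot_of_imp_of_imp_neg
    (Prf.imp_conj_of_mem List.mem_cons_self)
    (Prf.imp_conj_of_mem (List.mem_cons_of_mem _ List.mem_cons_self))⟩

theorem neg_mem_of_not_mem (hΓ : MaxConsistent Γ) (hφ : φ ∉ Γ) : Form.neg φ ∈ Γ :=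
  have ⟨_, hl, hneg⟩ := exists_conj_imp_neg_of_not_consistent_insert (hΓ.not_consistent_insert hφ)
  hΓ.mem_of_prf_conj_imp hl hneg

theorem eq_of_subset {Δ : Set (Form Sg L s)} (hΓ : MaxConsistent Γ) (hΔ : MaxConsistent Δ)
    (h : Γ ⊆ Δ) : Γ = Δ :=
  (hΓ.2 Δ hΔ.1 h).symm

end MaxConsistent

end MaxConsistent

namespace Ctx1

def comp {h m : Sg.S} : ∀ {u : Sg.S}, Ctx1 Sg m u → Ctx1 Sg h m → Ctx1 Sg h u
  | _, .hole, c => c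
  | _, .app σ i d args, c => .app σ i (d.comp c) args

theorem plug_comp {h m : Sg.S} (c : Ctx1 Sg h m) (φ : Form Sg L h) :
    ∀ {u : Sg.S} (d : Ctx1 Sg m u), (d.comp c).plug φ = d.plug (c.plug φ)
  | _, .hole => rfl
  | _, .app σ i d args => by simp only [comp, plug, plug_comp c φ d]

def single (σ : Sg.Op) (i : Fin (Sg.n σ)) : Ctx1 Sg (Sg.arg σ i) (Sg.res σ) :=
  .app σ i .hole fun _ => .top

end Ctx1

theorem CanR.plug_single_mem {σ : Sg.Op} {w : Set (Form Sg L (Sg.res σ))}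
    {us : ∀ i, Set (Form Sg L (Sg.arg σ i))} (hR : CanR σ w us)
    (hus : ∀ j, MaxConsistent (us j)) {i : Fin (Sg.n σ)} {ψ : Form Sg L (Sg.arg σ i)}
    (hψ : ψ ∈ us i) : (Ctx1.single σ i).plug ψ ∈ w := by
  refine hR _ fun j => ?_
  rcases eq_or_ne j i with rfl | hj
  · rw [Function.update_self]
    exact hψ
  · rw [Function.update_of_ne hj]
    exact (hus j).mem_of_prf Prf.top

theorem Reach.exists_ctx_plug_mem {s u : Sg.S} {Υ : Set (Form Sg L s)}
    {Γ : Set (Form Sg L u)} (hr : Reach Υ u Γ) :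
    ∃ η : Ctx1 Sg u s, ∀ ψ ∈ Γ, η.plug ψ ∈ Υ := by
  induction hr with
  | base => exact ⟨.hole, fun _ hψ => hψ⟩
  | step i _ hus hR ih =>
    obtain ⟨η, hη⟩ := ih
    refine ⟨η.comp (Ctx1.single _ i), fun ψ hψ => ?_⟩
    rw [Ctx1.plug_comp]
    exact hη _ (hR.plug_single_mem (fun j => (hus j).1) hψ)

section SubstSelf

variable {t : Sg.S} (x : L.SVAR t)

theorem subst_svar_self : ∀ {u : Sg.S} (φ : Form Sg L u), subst x (.svar x) φ = φ
  | _, .prop _ => rfl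
  | _, .nom _ => rfl
  | _, .svar y => by
    simp only [subst]
    split
    · next h =>
      obtain ⟨rfl, hxy⟩ := Sigma.mk.inj_iff.mp h
      cases eq_of_heq hxy
      rfl
    · rfl
  | _, .neg φ => by simp only [subst, subst_svar_self φ]
  | _, .or φ ψ => by simp only [subst, subst_svar_self φ, subst_svar_self ψ]
  | _, .app σ φs => by simp only [subst, subst_svar_self]
  | _, .all y φ => by
    simp only [subst, subst_svar_self φ]
    split <;> rfl

theorem substitutableV_self : ∀ {u : Sg.S} (φ : Form Sg L u), SubstitutableV x x φ
  | _, .prop _ | _, .nom _ | _, .svar _ => trivial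
  | _, .neg φ => substitutableV_self φ
  | _, .or φ ψ => ⟨substitutableV_self φ, substitutableV_self ψ⟩
  | _, .app _ φs => fun i => substitutableV_self (φs i)
  | _, .all y φ => by
    by_cases hyx : (⟨_, y⟩ : Σ v, L.SVAR v) = ⟨t, x⟩
    · exact Or.inl fun hx => hx.2 hyx.symm
    · exact Or.inr ⟨hyx, substitutableV_self φ⟩

theorem Prf.of_all_self {u : Sg.S} {φ : Form Sg L u} (h : Prf (.all x φ)) : Prf φ := by
  simpa only [subst_svar_self] using Prf.mp (Prf.q2v x x φ (substitutableV_self x φ)) h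

end SubstSelf

theorem svar_unique_in_witnessed_submodel {Sg : Sig} {L : Lang Sg} {s : Sg.S}
    {Υ : Set (Form Sg L s)} (hΥ : WMCS Υ) {t : Sg.S} (x : L.SVAR t)
    {Γ Δ : Set (Form Sg L t)}
    (hΓw : WMCS Γ) (hΓr : Reach Υ t Γ) (hΔw : WMCS Δ) (hΔr : Reach Υ t Δ)
    (hxΓ : Form.svar x ∈ Γ) (hxΔ : Form.svar x ∈ Δ) : Γ = Δ := by
  obtain ⟨η, hη⟩ := hΓr.exists_ctx_plug_mem
  obtain ⟨θ, hθ⟩ := hΔr.exists_ctx_plug_mem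
  refine hΓw.1.eq_of_subset hΔw.1 fun φ hφ => ?_
  have hbox : plugD θ (Form.imp (.svar x) φ) ∈ Υ :=
    hΥ.1.mem_of_prf_imp (Prf.of_all_self x (Prf.nomax η θ x φ)) (hη _ (hΓw.1.and_mem hxΓ hφ))
  have himp : Form.imp (.svar x) φ ∈ Δ := by
    by_contra hnot
    exact hΥ.1.not_mem_neg_of_mem (hθ _ (hΔw.1.neg_mem_of_not_mem hnot)) hbox
  exact hΔw.1.mem_of_imp_mem himp hxΔ

end HybridML
end

section
/- In the deductive system H_Σ(∀): let φ and χ be formulas, and x, y state variables such that y is substitutable for x in χ and y has no free occurrence in φ or in χ. Then for any sort s ∈ S, any σ ∈ Σ_{s1…sn,s}, any index t ∈ [n] with φ of sort s_t, and any formulas φ_i of sort s_i for i ∈ [n], i ≠ t: ⊢_s σ(φ_1,…,φ_{t−1}, φ, φ_{t+1},…,φ_n) → ∃y σ(φ_1,…,φ_{t−1}, (∃xχ → χ[y/x]) ∧ φ, φ_{t+1},…,φ_n). -/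
set_option maxHeartbeats 1000000

attribute [local instance] Classical.propDecidable

namespace HybridML

variable {Sg : Sig} {L : Lang Sg}

/-! ### Auxiliary lemmas for the witnessed conditional theorem -/

section WitnessAux

variable {Sg : Sig} {L : Lang Sg}

/-- Skeleton implication. -/
private def pim (p q : PForm) : PForm := .or (.neg p) q

/-- Skeleton conjunction. -/
private def pand (p q : PForm) : PForm := .neg (.or (.neg p) (.neg q))

private lemma prf_id {s} (α : Form Sg L s) : Prf (Form.imp α α) :=
  Prf.taut (pim (.atom 0) (.atom 0)) (fun _ => α)
    (by intro v; cases h0 : v 0 <;> cases h1 : v 1 <;> cases h2 : v 2 <;>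
        simp [PForm.eval, pim, pand, h0, h1, h2])

private lemma prf_trans {s} {α β γ : Form Sg L s} (h1 : Prf (Form.imp α β))
    (h2 : Prf (Form.imp β γ)) : Prf (Form.imp α γ) := by
  have t : Prf (Form.imp (Form.imp α β) (Form.imp (Form.imp β γ) (Form.imp α γ))) :=
    Prf.taut (pim (pim (.atom 0) (.atom 1)) (pim (pim (.atom 1) (.atom 2)) (pim (.atom 0) (.atom 2))))
      (fun n => if n = 0 then α else if n = 1 then β else γ)
      (by intro v; cases h0 : v 0 <;> cases h1 : v 1 <;> cases h2 : v 2 <;>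
        simp [PForm.eval, pim, pand, h0, h1, h2])
  exact (t.mp h1).mp h2

private lemma prf_contra' {s} {α β : Form Sg L s} (h : Prf (Form.imp α (.neg β))) :
    Prf (Form.imp β (.neg α)) := by
  have t : Prf (Form.imp (Form.imp α (.neg β)) (Form.imp β (.neg α))) :=
    Prf.taut (pim (pim (.atom 0) (.neg (.atom 1))) (pim (.atom 1) (.neg (.atom 0))))
      (fun n => if n = 0 then α else β)
      (by intro v; cases h0 : v 0 <;> cases h1 : v 1 <;> cases h2 : v 2 <;>
        simp [PForm.eval, pim, pand, h0, h1, h2])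
  exact t.mp h

private lemma prf_neg_intro {s} {δ γ : Form Sg L s} (h1 : Prf (Form.imp δ γ))
    (h2 : Prf (Form.imp δ (.neg γ))) : Prf (.neg δ) := by
  have t : Prf (Form.imp (Form.imp δ γ) (Form.imp (Form.imp δ (.neg γ)) (.neg δ))) :=
    Prf.taut (pim (pim (.atom 0) (.atom 1)) (pim (pim (.atom 0) (.neg (.atom 1))) (.neg (.atom 0))))
      (fun n => if n = 0 then δ else γ)
      (by intro v; cases h0 : v 0 <;> cases h1 : v 1 <;> cases h2 : v 2 <;>
        simp [PForm.eval, pim, pand, h0, h1, h2])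
  exact (t.mp h1).mp h2

private lemma prf_discharge {s} {δ φ γ : Form Sg L s} (h1 : Prf (Form.imp δ (Form.imp φ γ)))
    (h2 : Prf (.neg γ)) : Prf (Form.imp δ (.neg φ)) := by
  have t : Prf (Form.imp (Form.imp δ (Form.imp φ γ))
      (Form.imp (.neg γ) (Form.imp δ (.neg φ)))) :=
    Prf.taut (pim (pim (.atom 0) (pim (.atom 1) (.atom 2)))
        (pim (.neg (.atom 2)) (pim (.atom 0) (.neg (.atom 1)))))
      (fun n => if n = 0 then δ else if n = 1 then φ else γ)
      (by intro v; cases h0 : v 0 <;> cases h1 : v 1 <;> cases h2 : v 2 <;>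
        simp [PForm.eval, pim, pand, h0, h1, h2])
  exact (t.mp h1).mp h2

private lemma prf_negapp_dapp (σ : Sg.Op) (vs : ∀ j, Form Sg L (Sg.arg σ j)) :
    Prf (Form.imp (.neg (.app σ vs)) (dapp σ fun j => .neg (vs j))) := by
  have d := Prf.dualax σ vs
  have t : Prf (Form.imp (Form.iff (.app σ vs) (.neg (dapp σ fun j => .neg (vs j))))
      (Form.imp (.neg (.app σ vs)) (dapp σ fun j => .neg (vs j)))) :=
    Prf.taut (pim (pand (pim (.atom 0) (.neg (.atom 1))) (pim (.neg (.atom 1)) (.atom 0)))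
        (pim (.neg (.atom 0)) (.atom 1)))
      (fun n => if n = 0 then (.app σ vs) else (dapp σ fun j => .neg (vs j)))
      (by intro v; cases h0 : v 0 <;> cases h1 : v 1 <;> cases h2 : v 2 <;>
        simp [PForm.eval, pim, pand, h0, h1, h2])
  exact t.mp d

private lemma prf_dapp_negapp (σ : Sg.Op) (vs : ∀ j, Form Sg L (Sg.arg σ j)) :
    Prf (Form.imp (dapp σ fun j => .neg (vs j)) (.neg (.app σ vs))) := by
  have d := Prf.dualax σ vs
  have t : Prf (Form.imp (Form.iff (.app σ vs) (.neg (dapp σ fun j => .neg (vs j))))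
      (Form.imp (dapp σ fun j => .neg (vs j)) (.neg (.app σ vs)))) :=
    Prf.taut (pim (pand (pim (.atom 0) (.neg (.atom 1))) (pim (.neg (.atom 1)) (.atom 0)))
        (pim (.atom 1) (.neg (.atom 0))))
      (fun n => if n = 0 then (.app σ vs) else (dapp σ fun j => .neg (vs j)))
      (by intro v; cases h0 : v 0 <;> cases h1 : v 1 <;> cases h2 : v 2 <;>
        simp [PForm.eval, pim, pand, h0, h1, h2])
  exact t.mp d

private lemma substitutable_self {u} (x : L.SVAR u) :
    ∀ {s} (θ : Form Sg L s), SubstitutableV x x θ := by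
  intro s θ
  induction θ with
  | prop p => trivial
  | nom j => trivial
  | svar z => trivial
  | neg φ ih => exact ih
  | or φ ψ ih1 ih2 => exact ⟨ih1, ih2⟩
  | app σ φs ih => exact ih
  | all z φ ih =>
    by_cases h : (⟨_, z⟩ : Σ v, L.SVAR v) = ⟨u, x⟩
    · refine Or.inl ?_
      simp only [free]
      rw [h]
      simp
    · exact Or.inr ⟨h, ih⟩

private lemma subst_self {u} (x : L.SVAR u) :
    ∀ {s} (θ : Form Sg L s), subst x (.svar x) θ = θ := by
  intro s θ
  induction θ with
  | prop p => rfl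
  | nom j => rfl
  | svar z =>
    by_cases h : (⟨_, z⟩ : Σ v, L.SVAR v) = ⟨u, x⟩
    · obtain ⟨h1, h2⟩ := Sigma.mk.inj_iff.mp h
      subst h1
      obtain rfl := eq_of_heq h2
      simp [subst]
    · simp only [subst]
      rw [dif_neg h]
  | neg φ ih => simp only [subst]; rw [ih]
  | or φ ψ ih1 ih2 => simp only [subst]; rw [ih1, ih2]
  | app σ φs ih => simp only [subst]; exact congrArg _ (funext ih)
  | all z φ ih =>
    by_cases h : (⟨_, z⟩ : Σ v, L.SVAR v) = ⟨u, x⟩ <;> simp [subst, h, ih]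

private lemma subst_notfree {u} (x : L.SVAR u) (ζ : Form Sg L u) :
    ∀ {s} (θ : Form Sg L s), (⟨u, x⟩ : Σ v, L.SVAR v) ∉ free θ → subst x ζ θ = θ := by
  intro s θ
  induction θ with
  | prop p => intro _; rfl
  | nom j => intro _; rfl
  | svar z =>
    intro h
    have h' : (⟨_, z⟩ : Σ v, L.SVAR v) ≠ ⟨u, x⟩ := fun he => h (by simp [free, he])
    simp [subst, h']
  | neg φ ih => intro h; simp only [subst]; rw [ih h]
  | or φ ψ ih1 ih2 =>
    intro h
    simp only [free, Set.mem_union] at h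
    push_neg at h
    simp only [subst]; rw [ih1 h.1, ih2 h.2]
  | app σ φs ih =>
    intro h
    simp only [free, Set.mem_iUnion] at h
    push_neg at h
    simp only [subst]
    exact congrArg _ (funext fun j => ih j (h j))
  | all z φ ih =>
    intro h
    by_cases hz : (⟨_, z⟩ : Σ v, L.SVAR v) = ⟨u, x⟩
    · simp [subst, hz]
    · have hfm : (⟨u, x⟩ : Σ v, L.SVAR v) ∉ free φ := by
        intro hmem
        exact h ⟨hmem, fun he => hz (Set.mem_singleton_iff.mp he).symm⟩
      simp [subst, hz, ih hfm]

private lemma notfree_subst {u} (x y : L.SVAR u)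
    (hxy : (⟨u, x⟩ : Σ v, L.SVAR v) ≠ ⟨u, y⟩) :
    ∀ {s} (θ : Form Sg L s), (⟨u, x⟩ : Σ v, L.SVAR v) ∉ free (subst x (.svar y) θ) := by
  intro s θ
  induction θ with
  | prop p => simp [subst, free]
  | nom j => simp [subst, free]
  | svar z =>
    by_cases h : (⟨_, z⟩ : Σ v, L.SVAR v) = ⟨u, x⟩
    · obtain ⟨h1, h2⟩ := Sigma.mk.inj_iff.mp h
      subst h1
      obtain rfl := eq_of_heq h2
      simp only [subst]
      simp only [dif_pos rfl, cast_eq]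
      simpa [free] using hxy
    · simp only [subst]
      rw [dif_neg h]
      simp only [free, Set.mem_singleton_iff]
      exact fun he => h he.symm
  | neg φ ih => exact ih
  | or φ ψ ih1 ih2 =>
    simp only [subst, free, Set.mem_union]
    push_neg
    exact ⟨ih1, ih2⟩
  | app σ φs ih =>
    simp only [subst, free, Set.mem_iUnion]
    push_neg
    exact ih
  | all z φ ih =>
    by_cases h : (⟨_, z⟩ : Σ v, L.SVAR v) = ⟨u, x⟩
    · simp only [subst]
      rw [if_pos h]
      intro hmem
      exact hmem.2 (Set.mem_singleton_iff.mpr h.symm)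
    · simp only [subst]
      rw [if_neg h]
      intro hmem
      exact ih hmem.1

private lemma substitutable_back {u} (x y : L.SVAR u) :
    ∀ {s} (θ : Form Sg L s), (⟨u, y⟩ : Σ v, L.SVAR v) ∉ free θ →
      SubstitutableV y x (subst x (.svar y) θ) := by
  intro s θ
  induction θ with
  | prop p => intro _; trivial
  | nom j => intro _; trivial
  | svar z =>
    intro _
    by_cases h : (⟨_, z⟩ : Σ v, L.SVAR v) = ⟨u, x⟩
    · obtain ⟨h1, h2⟩ := Sigma.mk.inj_iff.mp h
      subst h1
      obtain rfl := eq_of_heq h2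
      simp only [subst]
      simp only [dite_true, cast_eq]
      trivial
    · simp only [subst]
      rw [dif_neg h]
      trivial
  | neg φ ih => exact ih
  | or φ ψ ih1 ih2 =>
    intro h
    simp only [free, Set.mem_union] at h
    push_neg at h
    exact ⟨ih1 h.1, ih2 h.2⟩
  | app σ φs ih =>
    intro h
    simp only [free, Set.mem_iUnion] at h
    push_neg at h
    exact fun j => ih j (h j)
  | all z φ ih =>
    intro h
    by_cases hz : (⟨_, z⟩ : Σ v, L.SVAR v) = ⟨u, x⟩
    · simp only [subst]
      rw [if_pos hz]
      exact Or.inl h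
    · simp only [subst]
      rw [if_neg hz]
      by_cases hzy : (⟨_, z⟩ : Σ v, L.SVAR v) = ⟨u, y⟩
      · exact Or.inl (fun hmem => hmem.2 (Set.mem_singleton_iff.mpr hzy.symm))
      · refine Or.inr ⟨hz, ih ?_⟩
        intro hmem
        exact h ⟨hmem, fun he => hzy (Set.mem_singleton_iff.mp he).symm⟩

private lemma subst_roundtrip {u} (x y : L.SVAR u)
    (hxy : (⟨u, x⟩ : Σ v, L.SVAR v) ≠ ⟨u, y⟩) :
    ∀ {s} (θ : Form Sg L s), (⟨u, y⟩ : Σ v, L.SVAR v) ∉ free θ → SubstitutableV x y θ →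
      subst y (.svar x) (subst x (.svar y) θ) = θ := by
  intro s θ
  induction θ with
  | prop p => intro _ _; rfl
  | nom j => intro _ _; rfl
  | svar z =>
    intro hfr _
    by_cases h : (⟨_, z⟩ : Σ v, L.SVAR v) = ⟨u, x⟩
    · obtain ⟨h1, h2⟩ := Sigma.mk.inj_iff.mp h
      subst h1
      obtain rfl := eq_of_heq h2
      simp [subst]
    · have h' : (⟨_, z⟩ : Σ v, L.SVAR v) ≠ ⟨u, y⟩ := fun he => hfr (by simp [free, he])
      simp only [subst]
      rw [dif_neg h]
      simp only [subst]
      rw [dif_neg h']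
  | neg φ ih =>
    intro hfr hs
    simp only [subst]
    rw [ih hfr hs]
  | or φ ψ ih1 ih2 =>
    intro hfr hs
    simp only [free, Set.mem_union] at hfr
    push_neg at hfr
    simp only [subst]
    rw [ih1 hfr.1 hs.1, ih2 hfr.2 hs.2]
  | app σ φs ih =>
    intro hfr hs
    simp only [free, Set.mem_iUnion] at hfr
    push_neg at hfr
    simp only [subst]
    exact congrArg _ (funext fun j => ih j (hfr j) (hs j))
  | all z φ ih =>
    intro hfr hs
    by_cases hz : (⟨_, z⟩ : Σ v, L.SVAR v) = ⟨u, x⟩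
    · -- inner substitution leaves the formula unchanged
      simp only [subst]
      rw [if_pos hz]
      have hzy : (⟨_, z⟩ : Σ v, L.SVAR v) ≠ ⟨u, y⟩ := by rw [hz]; exact hxy
      have hyφ : (⟨u, y⟩ : Σ v, L.SVAR v) ∉ free φ := by
        intro hmem
        exact hfr ⟨hmem, fun he => hzy (Set.mem_singleton_iff.mp he).symm⟩
      simp only [subst]
      rw [if_neg hzy, subst_notfree y (.svar x) φ hyφ]
    · simp only [subst]
      rw [if_neg hz]
      by_cases hzy : (⟨_, z⟩ : Σ v, L.SVAR v) = ⟨u, y⟩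
      · -- z = y : inner substitution is trivial since x is not free in φ
        have hxφ : (⟨u, x⟩ : Σ v, L.SVAR v) ∉ free φ := by
          rcases hs with hs | ⟨hne, _⟩
          · intro hmem
            exact hs ⟨hmem, fun he => hz (Set.mem_singleton_iff.mp he).symm⟩
          · exact absurd hzy hne
        rw [subst_notfree x (.svar y) φ hxφ]
        simp only [subst]
        rw [if_pos hzy]
      · have hyφ : (⟨u, y⟩ : Σ v, L.SVAR v) ∉ free φ := by
          intro hmem
          exact hfr ⟨hmem, fun he => hzy (Set.mem_singleton_iff.mp he).symm⟩
        rcases hs with hs | ⟨_, hsφ⟩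
        · have hxφ : (⟨u, x⟩ : Σ v, L.SVAR v) ∉ free φ := by
            intro hmem
            exact hs ⟨hmem, fun he => hz (Set.mem_singleton_iff.mp he).symm⟩
          rw [subst_notfree x (.svar y) φ hxφ]
          simp only [subst]
          rw [if_neg hzy, subst_notfree y (.svar x) φ hyφ]
        · simp only [subst]
          rw [if_neg hzy, ih hyφ hsφ]

private lemma prf_all_mono {s u} (z : L.SVAR u) {α β : Form Sg L s}
    (h : Prf (Form.imp α β)) : Prf (Form.imp (.all z α) (.all z β)) := by
  have h1 : Prf (Form.imp (.all z α) α) := by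
    have h0 := Prf.q2v z z α (substitutable_self z α)
    rwa [subst_self] at h0
  have h2 : Prf (Form.imp (.all z α) β) := prf_trans h1 h
  have h3 : Prf (.all z (Form.imp (.all z α) β)) := Prf.gen z h2
  have h4 := Prf.q1 z (.all z α) β (by simp [free])
  exact h4.mp h3

private lemma prf_dapp_mono (σ : Sg.Op) (i : Fin (Sg.n σ)) (γs : ∀ j, Form Sg L (Sg.arg σ j))
    {α β : Form Sg L (Sg.arg σ i)} (h : Prf (Form.imp α β)) :
    Prf (Form.imp (dapp σ (Function.update γs i α)) (dapp σ (Function.update γs i β))) :=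
  (Prf.kax σ i γs α β).mp (Prf.ug σ i γs h)

private lemma prf_rename {s u} (x y : L.SVAR u) (θ : Form Sg L s)
    (hsub : SubstitutableV x y θ) (hy : (⟨u, y⟩ : Σ v, L.SVAR v) ∉ free θ) :
    Prf (Form.imp (.all y (subst x (.svar y) θ)) (.all x θ)) := by
  by_cases hxy : x = y
  · subst hxy
    rw [subst_self]
    exact prf_id _
  · have hxy' : (⟨u, x⟩ : Σ v, L.SVAR v) ≠ ⟨u, y⟩ := by simp [hxy]
    have a := Prf.q2v y x (subst x (.svar y) θ) (substitutable_back x y θ hy)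
    rw [subst_roundtrip x y hxy' θ hy hsub] at a
    have b := Prf.gen x a
    have c := Prf.q1 x (.all y (subst x (.svar y) θ)) θ ?_
    · exact c.mp b
    · simp only [free]
      intro hmem
      exact notfree_subst x y hxy' θ hmem.1

private lemma prf_exists_witness {s u} (x y : L.SVAR u) (χ : Form Sg L s)
    (hsub : SubstitutableV x y χ) (hy : (⟨u, y⟩ : Σ v, L.SVAR v) ∉ free χ) :
    Prf (.neg (.all y (.neg (Form.imp (exi x χ) (subst x (.svar y) χ))))) := by
  have A : Form Sg L s := exi x χ
  set B : Form Sg L s := subst x (.svar y) χ with hB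
  set W : Form Sg L s := Form.imp (exi x χ) B with hWdef
  -- renaming: ∀y ¬B → ∀x ¬χ
  have ra : Prf (Form.imp (.all y (.neg B)) (.all x (.neg χ))) :=
    prf_rename x y (.neg χ) hsub hy
  -- ¬W → ¬B, hence ∀y¬W → ∀y¬B
  have t1 : Prf (Form.imp (.neg W) (.neg B)) :=
    Prf.taut (pim (.neg (pim (.atom 0) (.atom 1))) (.neg (.atom 1)))
      (fun n => if n = 0 then exi x χ else B)
      (by intro v; cases h0 : v 0 <;> cases h1 : v 1 <;> cases h2 : v 2 <;>
        simp [PForm.eval, pim, pand, h0, h1, h2])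
  have d1 : Prf (Form.imp (.all y (.neg W)) (.all x (.neg χ))) :=
    prf_trans (prf_all_mono y t1) ra
  -- ∀x¬χ → ¬(exi x χ)
  have t2 : Prf (Form.imp (.all x (.neg χ)) (.neg (exi x χ))) :=
    Prf.taut (pim (.atom 0) (.neg (.neg (.atom 0))))
      (fun _ => .all x (.neg χ))
      (by intro v; cases h0 : v 0 <;> cases h1 : v 1 <;> cases h2 : v 2 <;>
        simp [PForm.eval, pim, pand, h0, h1, h2])
  have d2 : Prf (Form.imp (.all y (.neg W)) (.neg (exi x χ))) := prf_trans d1 t2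
  -- ∀y¬W → ¬W → exi x χ
  have h1 : Prf (Form.imp (.all y (.neg W)) (.neg W)) := by
    have h0 := Prf.q2v y y (.neg W) (substitutable_self y (.neg W))
    rwa [subst_self] at h0
  have t3 : Prf (Form.imp (.neg W) (exi x χ)) :=
    Prf.taut (pim (.neg (pim (.atom 0) (.atom 1))) (.atom 0))
      (fun n => if n = 0 then exi x χ else B)
      (by intro v; cases h0 : v 0 <;> cases h1 : v 1 <;> cases h2 : v 2 <;>
        simp [PForm.eval, pim, pand, h0, h1, h2])
  have d3 : Prf (Form.imp (.all y (.neg W)) (exi x χ)) := prf_trans h1 t3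
  exact prf_neg_intro d3 d2

end WitnessAux

/-! ## STATEMENT 5: the auxiliary theorem for witnessed conditionals -/
theorem exists_witness_conditional {Sg : Sig} {L : Lang Sg} (σ : Sg.Op) (i : Fin (Sg.n σ))
    (φs : ∀ j, Form Sg L (Sg.arg σ j)) {t : Sg.S} (x y : L.SVAR t)
    (φ χ : Form Sg L (Sg.arg σ i))
    (hsub : SubstitutableV x y χ)
    (hyφ : (⟨t, y⟩ : Σ v, L.SVAR v) ∉ free φ)
    (hyχ : (⟨t, y⟩ : Σ v, L.SVAR v) ∉ free χ) :
    Prf (Form.imp (.app σ (Function.update φs i φ))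
      (exi y (.app σ (Function.update φs i
        (Form.and (Form.imp (exi x χ) (subst x (.svar y) χ)) φ))))):= by
  have W : Form Sg L (Sg.arg σ i) := Form.imp (exi x χ) (subst x (.svar y) χ)
  set ψ : Form Sg L (Sg.arg σ i) :=
    Form.and (Form.imp (exi x χ) (subst x (.svar y) χ)) φ with hψ
  set vs := Function.update φs i ψ with hvs
  set us := Function.update φs i φ with hus
  -- (f) : ∀y ¬ψ → ¬φ
  have hexw : Prf (.neg (.all y (.neg (Form.imp (exi x χ) (subst x (.svar y) χ))))) :=
    prf_exists_witness x y χ hsub hyχ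
  have hb : Prf (Form.imp (.neg ψ)
      (Form.imp φ (.neg (Form.imp (exi x χ) (subst x (.svar y) χ))))) :=
    Prf.taut (pim (.neg (pand (.atom 0) (.atom 1))) (pim (.atom 1) (.neg (.atom 0))))
      (fun n => if n = 0 then Form.imp (exi x χ) (subst x (.svar y) χ) else φ)
      (by intro v; cases h0 : v 0 <;> cases h1 : v 1 <;> cases h2 : v 2 <;>
        simp [PForm.eval, pim, pand, h0, h1, h2])
  have hc := Prf.q1 y φ (.neg (Form.imp (exi x χ) (subst x (.svar y) χ))) hyφ
  have hd := prf_trans (prf_all_mono y hb) hc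
  have hf : Prf (Form.imp (.all y (.neg ψ)) (.neg φ)) := prf_discharge hd hexw
  -- modal part
  have g1 : Prf (Form.imp (.neg (.app σ vs)) (dapp σ fun j => .neg (vs j))) :=
    prf_negapp_dapp σ vs
  have g2 := prf_all_mono y g1
  have g3 := Prf.barcan σ i y (fun j => .neg (vs j))
  have hvsi : vs i = ψ := Function.update_self i ψ φs
  rw [hvsi] at g3
  have g4 := prf_trans g2 g3
  have g5 := prf_dapp_mono σ i (fun j => .neg (vs j)) hf
  have hupd : Function.update (fun j => Form.neg (vs j)) i (Form.neg φ)
      = fun j => Form.neg (us j) := by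
    funext j
    by_cases hj : j = i
    · subst hj
      rw [Function.update_self, hus, Function.update_self]
    · rw [Function.update_of_ne hj, hvs, hus, Function.update_of_ne hj,
        Function.update_of_ne hj]
  rw [hupd] at g5
  have g6 := prf_trans g4 g5
  have g7 : Prf (Form.imp (dapp σ fun j => .neg (us j)) (.neg (.app σ us))) :=
    prf_dapp_negapp σ us
  have g8 := prf_trans g6 g7
  exact prf_contra' g8


end HybridML
end

section
/- Model correspondence between Matching Logic and many-sorted hybrid modal logic: Let φ ∈ Form⁰_s (a hybrid formula of sort s containing no nominals and no propositional variables, hence a matching logic pattern). Then: (1) for every matching logic model M and M-valuation ρ, (M,ρ) ⊨^{ML}_s φ if and only if (F_M, ρ) ⊨^{HModL}_s φ; and (2) for every frame F with assignment g, (F,g) ⊨^{HModL}_s φ if and only if (M_F, g) ⊨^{ML}_s φ. -/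
set_option maxHeartbeats 1000000

attribute [local instance] Classical.propDecidable

namespace HybridML

variable {Sg : Sig} {L : Lang Sg}

theorem mem_extV_iff_satP {SV : Sg.S → Type} (K : MLModel Sg) {s : Sg.S} (φ : Pat Sg SV s) :
    ∀ (ρ : Valu SV K) (w : K.M s), w ∈ extV K ρ φ ↔ SatP (frameOf K) ρ φ w := by
  induction φ with
  | svar x => exact fun _ _ => Iff.rfl
  | neg φ ih => exact fun ρ w => not_congr (ih ρ w)
  | or φ ψ ihφ ihψ => exact fun ρ w => or_congr (ihφ ρ w) (ihψ ρ w)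
  | app σ φs ih =>
    intro ρ w
    constructor
    · rintro ⟨ws, hws, hw⟩
      exact ⟨ws, hw, fun i => (ih i ρ (ws i)).1 (hws i)⟩
    · rintro ⟨ws, hw, hws⟩
      exact ⟨ws, fun i => (ih i ρ (ws i)).2 (hws i), hw⟩
  | ex x φ ih => exact fun _ w => exists_congr fun ρ' => and_congr Iff.rfl (ih ρ' w)

theorem mlSat_iff_forall_satP {SV : Sg.S → Type} (K : MLModel Sg) (ρ : Valu SV K) {s : Sg.S}
    (φ : Pat Sg SV s) : MLSat K ρ φ ↔ ∀ w : K.M s, SatP (frameOf K) ρ φ w := by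
  rw [MLSat, Set.eq_univ_iff_forall]
  exact forall_congr' (mem_extV_iff_satP K φ ρ)

theorem ml_hybrid_model_correspondence {Sg : Sig} {SV : Sg.S → Type} {s : Sg.S}
    (φ : Pat Sg SV s) :
    (∀ (K : MLModel Sg) (ρ : Valu SV K),
        MLSat K ρ φ ↔ ∀ w : K.M s, SatP (frameOf K) ρ φ w) ∧
    (∀ (F : Frame Sg) (g : FAssign SV F),
        (∀ w : F.W s, SatP F g φ w) ↔ MLSat (mlOf F) g φ) :=
  -- `frameOf (mlOf F)` is `F` by definitional unfolding and structure eta.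
  ⟨fun K ρ => mlSat_iff_forall_satP K ρ φ, fun F g => (mlSat_iff_forall_satP (mlOf F) g φ).symm⟩

end HybridML
end
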